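/- Let T₁ and T₂ be the vertex sets of two embedded four-cycles in a triangle-free graph Γ such that T₁ ∩ T₂ = {s, t, u} where s and u are both adjacent to t. Then s and u are not adjacent, W_{T₁ ∩ T₂} is isomorphic to D∞ × (ℤ/2ℤ), and W_{T₁ ∪ T₂} is isomorphic to the amalgamated product W_{T₁} *_{D∞ × ℤ/2ℤ} W_{T₂}, where each W_{T_i} is isomorphic to D∞ × D∞. -/

import Mathlib

/-- The set of relators of the right-angled Coxeter group of a graph `Γ`:
squares of the generators, and commutators of generators joined by an edge. -/
def racgRels {V : Type*} (Γ : SimpleGraph V) : Set (FreeGroup V) :=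
  {r | (∃ s : V, r = FreeGroup.of s * FreeGroup.of s) ∨
       (∃ s t : V, Γ.Adj s t ∧
         r = FreeGroup.of s * FreeGroup.of t * (FreeGroup.of s)⁻¹ * (FreeGroup.of t)⁻¹)}

/-- The right-angled Coxeter group of a graph `Γ`. -/
abbrev RACG {V : Type*} (Γ : SimpleGraph V) : Type _ := PresentedGroup (racgRels Γ)

/-- The generator of `RACG Γ` corresponding to a vertex `s`. -/
def racgGen {V : Type*} (Γ : SimpleGraph V) (s : V) : RACG Γ :=
  PresentedGroup.of (rels := racgRels Γ) s

/-- An embedded four-cycle in a simple graph `G`: four vertices in cyclic order,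
with consecutive vertices adjacent and the two diagonals distinct non-edges. -/
structure FourCycle {V : Type*} (G : SimpleGraph V) where
  v : Fin 4 → V
  adj : ∀ i : Fin 4, G.Adj (v i) (v (i + 1))
  ne02 : v 0 ≠ v 2
  ne13 : v 1 ≠ v 3
  nadj02 : ¬ G.Adj (v 0) (v 2)
  nadj13 : ¬ G.Adj (v 1) (v 3)

/-- `{a, b}` is an edge of the four-cycle `c`. -/
def FourCycle.HasEdge {V : Type*} {G : SimpleGraph V} (c : FourCycle G) (a b : V) : Prop :=
  ∃ i : Fin 4, (c.v i = a ∧ c.v (i + 1) = b) ∨ (c.v i = b ∧ c.v (i + 1) = a)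

/-- Two four-cycles share a pair of adjacent edges (two edges meeting at a vertex):
this is the adjacency relation defining the four-cycle graph `Γ⁴`. -/
def SharesPair {V : Type*} {G : SimpleGraph V} (c d : FourCycle G) : Prop :=
  ∃ x y z : V, x ≠ z ∧ c.HasEdge x y ∧ c.HasEdge y z ∧ d.HasEdge x y ∧ d.HasEdge y z

/-- `Γ` is CFS: some connected component of the four-cycle graph `Γ⁴` has support
the entire vertex set of `Γ`. -/
def IsCFS {V : Type*} (G : SimpleGraph V) : Prop :=
  ∃ c : FourCycle G, ∀ x : V, ∃ d : FourCycle G,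
    Relation.ReflTransGen SharesPair c d ∧ ∃ i : Fin 4, d.v i = x
universe u

/-- A two-element family of groups indexed by `Bool`, used to form binary
amalgamated free products via `Monoid.PushoutI`. -/
def famG (G₁ G₂ : Type u) : Bool → Type u
  | true => G₁
  | false => G₂

instance famGGroup (G₁ G₂ : Type u) [Group G₁] [Group G₂] : ∀ b, Group (famG G₁ G₂ b)
  | true => ‹Group G₁›
  | false => ‹Group G₂›

/-- The pair of amalgamating homomorphisms, as a `Bool`-indexed family. -/
def famHom {A G₁ G₂ : Type u} [Group A] [Group G₁] [Group G₂]
    (f : A →* G₁) (g : A →* G₂) : ∀ b, A →* famG G₁ G₂ b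
  | true => f
  | false => g

/-- The amalgamated free product `G₁ *_A G₂` along `f : A →* G₁`, `g : A →* G₂`. -/
abbrev AmalgProd {A G₁ G₂ : Type u} [Group A] [Group G₁] [Group G₂]
    (f : A →* G₁) (g : A →* G₂) : Type u :=
  Monoid.PushoutI (famHom f g)

/-- The infinite dihedral group, as the free product `(ℤ/2ℤ) * (ℤ/2ℤ)`. -/
abbrev Dinf : Type := Monoid.Coprod (Multiplicative (ZMod 2)) (Multiplicative (ZMod 2))

/-
Triangle-freeness forces `s ≁ u`, so `T₁ ∩ T₂` spans the path `s - t - u`; in a four-cycle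
through the non-adjacent pair `s, u` the two remaining vertices are adjacent to `s`, hence an
edge between `T₁ \ T₂` and `T₂ \ T₁` would close a triangle with `s`.

A special subgroup `W_S` is the right-angled Coxeter group of the induced subgraph `Γ[S]`, the
retraction `W_Γ → W_S` killing the generators outside `S` providing injectivity. A right-angled
Coxeter group is identified with a group `K` by a generating family of `K` satisfying the
Coxeter relations together with a homomorphism back; for the path and the four-cycle, `K` is
`D∞ × ℤ/2ℤ`, resp. `D∞ × D∞`. For `T₁ ∪ T₂`, `K` is the amalgam `W_{T₁} *_{W_{T₁ ∩ T₂}} W_{T₂}`,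
and its generators commute along every edge exactly because no edge joins `T₁ \ T₂` to
`T₂ \ T₁`.
-/

section RACG

variable {W : Type*} {G : SimpleGraph W}

theorem racgGen_mul_self (w : W) : racgGen G w * racgGen G w = 1 :=
  (QuotientGroup.eq_one_iff _).2 <| Subgroup.subset_normalClosure <| Or.inl ⟨w, rfl⟩

theorem commute_racgGen {a b : W} (h : G.Adj a b) : Commute (racgGen G a) (racgGen G b) := by
  have hrel : racgGen G a * racgGen G b * (racgGen G a)⁻¹ * (racgGen G b)⁻¹ = 1 :=
    (QuotientGroup.eq_one_iff _).2 <| Subgroup.subset_normalClosure <| Or.inr ⟨a, b, h, rfl⟩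
  rwa [mul_inv_eq_one, mul_inv_eq_iff_eq_mul] at hrel

variable {K : Type*} [Group K] (f : W → K) (hsq : ∀ w, f w * f w = 1)
  (hcomm : ∀ a b, G.Adj a b → Commute (f a) (f b))

def racgLift : RACG G →* K :=
  PresentedGroup.toGroup (f := f) <| by
    rintro r (⟨w, rfl⟩ | ⟨a, b, h, rfl⟩)
    · simpa using hsq w
    · simp [(hcomm a b h).eq]

@[simp]
theorem racgLift_racgGen (w : W) : racgLift f hsq hcomm (racgGen G w) = f w :=
  PresentedGroup.toGroup.of _

def racgLiftEquiv (hf : Subgroup.closure (Set.range f) = ⊤) (g : K →* RACG G)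
    (hg : ∀ w, g (f w) = racgGen G w) : RACG G ≃* K :=
  MonoidHom.toMulEquiv (racgLift f hsq hcomm) g
    (PresentedGroup.ext fun w => (congrArg g (racgLift_racgGen f hsq hcomm w)).trans (hg w))
    (MonoidHom.eq_of_eqOn_dense hf <| by rintro _ ⟨w, rfl⟩; simp [hg])

@[simp]
theorem racgLiftEquiv_racgGen (hf : Subgroup.closure (Set.range f) = ⊤) (g : K →* RACG G)
    (hg : ∀ w, g (f w) = racgGen G w) (w : W) :
    racgLiftEquiv f hsq hcomm hf g hg (racgGen G w) = f w :=
  racgLift_racgGen f hsq hcomm w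

end RACG

section Special

open Subgroup

variable {V : Type*} (Γ : SimpleGraph V)

abbrev specialSubgroup (S : Set V) : Subgroup (RACG Γ) := closure (racgGen Γ '' S)

def specialGen {S : Set V} (v : S) : specialSubgroup Γ S :=
  ⟨racgGen Γ v, subset_closure ⟨v, v.2, rfl⟩⟩

variable {Γ}

theorem specialGen_mul_self {S : Set V} (v : S) : specialGen Γ v * specialGen Γ v = 1 :=
  Subtype.ext (racgGen_mul_self (v : V))

theorem commute_specialGen {S : Set V} {a b : S} (h : Γ.Adj a b) :
    Commute (specialGen Γ a) (specialGen Γ b) :=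
  Subtype.ext (commute_racgGen h).eq

theorem closure_range_specialGen (S : Set V) :
    closure (Set.range (specialGen Γ (S := S))) = ⊤ := by
  convert closure_closure_coe_preimage (k := racgGen Γ '' S)
  ext x
  constructor
  · rintro ⟨v, rfl⟩
    exact ⟨v, v.2, rfl⟩
  · rintro ⟨v, hv, hx⟩
    exact ⟨⟨v, hv⟩, Subtype.ext hx⟩

open scoped Classical in
noncomputable def racgRetraction (S : Set V) : RACG Γ →* RACG (Γ.induce S) :=
  racgLift (fun v => if h : v ∈ S then racgGen _ ⟨v, h⟩ else 1)
    (fun v => by split_ifs <;> simp [racgGen_mul_self])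
    (fun a b hab => by
      split_ifs with ha hb hb
      exacts [commute_racgGen hab, .one_right _, .one_left _, .one_left _])

theorem racgRetraction_racgGen {S : Set V} (v : S) :
    racgRetraction S (racgGen Γ v) = racgGen (Γ.induce S) v := by
  simp [racgRetraction]

noncomputable def specialEquiv (S : Set V) : RACG (Γ.induce S) ≃* specialSubgroup Γ S :=
  racgLiftEquiv (specialGen Γ) specialGen_mul_self (fun _ _ h => commute_specialGen h)
    (closure_range_specialGen S) ((racgRetraction S).comp (specialSubgroup Γ S).subtype)
    racgRetraction_racgGen

@[simp]
theorem specialEquiv_racgGen {S : Set V} (v : S) :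
    specialEquiv S (racgGen _ v) = specialGen Γ v :=
  racgLiftEquiv_racgGen ..

theorem specialSubgroup_mono {S T : Set V} (h : S ⊆ T) :
    specialSubgroup Γ S ≤ specialSubgroup Γ T :=
  closure_mono (Set.image_mono h)

end Special

section Dihedral

@[simp]
theorem ofAdd_one_mul_self_zmod_two : Multiplicative.ofAdd (1 : ZMod 2) * .ofAdd 1 = 1 := rfl

variable {G : Type*} [Group G]

def involutionHom (g : G) (hg : g * g = 1) : Multiplicative (ZMod 2) →* G :=
  AddMonoidHom.toMultiplicativeLeft <| ZMod.lift 2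
    ⟨zmultiplesHom _ (Additive.ofMul g), by simpa [two_zsmul] using congrArg Additive.ofMul hg⟩

@[simp]
theorem involutionHom_ofAdd_one (g : G) (hg : g * g = 1) :
    involutionHom g hg (Multiplicative.ofAdd 1) = g := by
  rw [involutionHom, AddMonoidHom.toMultiplicativeLeft_apply_apply, toAdd_ofAdd, ← Int.cast_one,
    ZMod.lift_coe]
  simp

theorem closure_ofAdd_one_zmod_two :
    Subgroup.closure {Multiplicative.ofAdd (1 : ZMod 2)} = ⊤ := by
  refine (Subgroup.eq_top_iff' _).2 fun x => ?_
  obtain rfl | rfl : x = 1 ∨ x = Multiplicative.ofAdd 1 := by revert x; decide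
  exacts [one_mem _, Subgroup.subset_closure rfl]

end Dihedral

section Generation

open Subgroup

variable {M N : Type*} [Group M] [Group N] {s : Set M} {t : Set N}

theorem Monoid.Coprod.closure_image_inl_union_image_inr (hs : closure s = ⊤)
    (ht : closure t = ⊤) : closure (Monoid.Coprod.inl '' s ∪ Monoid.Coprod.inr '' t) = ⊤ := by
  rw [Subgroup.closure_union, ← MonoidHom.map_closure, ← MonoidHom.map_closure, hs, ht,
    ← MonoidHom.range_eq_map, ← MonoidHom.range_eq_map, Monoid.Coprod.range_inl_sup_range_inr]

theorem Prod.closure_image_inl_union_image_inr (hs : closure s = ⊤) (ht : closure t = ⊤) :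
    closure (MonoidHom.inl M N '' s ∪ MonoidHom.inr M N '' t) = ⊤ := by
  refine eq_top_iff.2 ?_
  rw [← top_prod_top, prod_le_iff, ← hs, ← ht, MonoidHom.map_closure, MonoidHom.map_closure]
  exact ⟨closure_mono Set.subset_union_left, closure_mono Set.subset_union_right⟩

end Generation

section Dinf

open Subgroup Monoid

variable {G K : Type*} [Group G] [Group K]

theorem commute_map_of_closure_eq_top {f : K →* G} {S : Set K} (hS : closure S = ⊤) {z : G}
    (h : ∀ k ∈ S, Commute (f k) z) (k : K) : Commute (f k) z := by
  have hle : closure S ≤ (centralizer {z}).comap f :=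
    (closure_le _).2 fun k hk => mem_centralizer_singleton_iff.2 (h k hk).eq
  rw [hS] at hle
  exact mem_centralizer_singleton_iff.1 (hle (mem_top k))

theorem closure_inl_inr_ofAdd_one :
    closure {Coprod.inl (.ofAdd 1), Coprod.inr (.ofAdd 1)} = (⊤ : Subgroup Dinf) := by
  have := Coprod.closure_image_inl_union_image_inr closure_ofAdd_one_zmod_two
    closure_ofAdd_one_zmod_two
  rwa [Set.image_singleton, Set.image_singleton, Set.singleton_union] at this

def dinfLift (x y : G) (hx : x * x = 1) (hy : y * y = 1) : Dinf →* G :=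
  Coprod.lift (involutionHom x hx) (involutionHom y hy)

theorem commute_dinfLift {x y z : G} (hx : x * x = 1) (hy : y * y = 1) (hxz : Commute x z)
    (hyz : Commute y z) (m : Dinf) : Commute (dinfLift x y hx hy m) z := by
  refine commute_map_of_closure_eq_top closure_inl_inr_ofAdd_one ?_ m
  rintro _ (rfl | rfl) <;> simpa [dinfLift]

end Dinf

section SmallGraphs

open Subgroup Monoid

variable {W : Type*} {G : SimpleGraph W}

open scoped Classical in
noncomputable def racgPathEquiv {a b c : W} (hab : G.Adj a b) (hbc : G.Adj b c)
    (hac : ¬ G.Adj a c) (hac' : a ≠ c) (hcover : ∀ x, x = a ∨ x = b ∨ x = c) :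
    RACG G ≃* Dinf × Multiplicative (ZMod 2) := by
  set f : W → Dinf × Multiplicative (ZMod 2) := fun x =>
    if x = a then (Coprod.inl (.ofAdd 1), 1) else if x = c then (Coprod.inr (.ofAdd 1), 1)
    else (1, .ofAdd 1) with hf
  have fa : f a = (Coprod.inl (.ofAdd 1), 1) := by simp [hf]
  have fb : f b = (1, .ofAdd 1) := by simp [hf, hab.ne', hbc.ne]
  have fc : f c = (Coprod.inr (.ofAdd 1), 1) := by simp [hf, hac'.symm]
  have hsq : ∀ x, f x * f x = 1 := fun x => by
    rcases hcover x with rfl | rfl | rfl <;> simp [fa, fb, fc, ← map_mul]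
  have hcomm : ∀ x y, G.Adj x y → Commute (f x) (f y) := fun x y hxy => by
    rcases hcover x with rfl | rfl | rfl <;> rcases hcover y with rfl | rfl | rfl <;>
      first
      | exact absurd hxy (G.loopless _)
      | exact absurd hxy hac
      | exact absurd hxy.symm hac
      | simp [fa, fb, fc, commute_iff_eq]
  have hgen : closure (Set.range f) = ⊤ := by
    refine eq_top_iff.2 (Prod.closure_image_inl_union_image_inr closure_inl_inr_ofAdd_one
      closure_ofAdd_one_zmod_two ▸ closure_mono ?_)
    simp only [Set.image_insert_eq, Set.image_singleton, Set.union_subset_iff,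
      Set.insert_subset_iff, Set.singleton_subset_iff]
    exact ⟨⟨⟨a, fa⟩, ⟨c, fc⟩⟩, ⟨b, fb⟩⟩
  refine racgLiftEquiv f hsq hcomm hgen
    (MonoidHom.noncommCoprod (dinfLift _ _ (racgGen_mul_self a) (racgGen_mul_self c))
      (involutionHom _ (racgGen_mul_self b)) fun m n => ?_) fun x => ?_
  · refine (commute_map_of_closure_eq_top closure_ofAdd_one_zmod_two ?_ n).symm
    rintro _ rfl
    simpa using (commute_dinfLift _ _ (commute_racgGen hab) (commute_racgGen hbc.symm) m).symm
  · rcases hcover x with rfl | rfl | rfl <;> simp [fa, fb, fc, dinfLift]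

open scoped Classical in
noncomputable def racgFourCycleEquiv {a b c d : W} (hab : G.Adj a b) (hbc : G.Adj b c)
    (hcd : G.Adj c d) (hda : G.Adj d a) (hac : ¬ G.Adj a c) (hbd : ¬ G.Adj b d) (hac' : a ≠ c)
    (hbd' : b ≠ d) (hcover : ∀ x, x = a ∨ x = b ∨ x = c ∨ x = d) : RACG G ≃* Dinf × Dinf := by
  set f : W → Dinf × Dinf := fun x =>
    if x = a then (Coprod.inl (.ofAdd 1), 1) else if x = c then (Coprod.inr (.ofAdd 1), 1)
    else if x = b then (1, Coprod.inl (.ofAdd 1)) else (1, Coprod.inr (.ofAdd 1)) with hf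
  have fa : f a = (Coprod.inl (.ofAdd 1), 1) := by simp [hf]
  have fb : f b = (1, Coprod.inl (.ofAdd 1)) := by simp [hf, hab.ne', hbc.ne]
  have fc : f c = (Coprod.inr (.ofAdd 1), 1) := by simp [hf, hac'.symm]
  have fd : f d = (1, Coprod.inr (.ofAdd 1)) := by simp [hf, hda.ne, hcd.ne', hbd'.symm]
  have hsq : ∀ x, f x * f x = 1 := fun x => by
    rcases hcover x with rfl | rfl | rfl | rfl <;> simp [fa, fb, fc, fd, ← map_mul]
  have hcomm : ∀ x y, G.Adj x y → Commute (f x) (f y) := fun x y hxy => by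
    rcases hcover x with rfl | rfl | rfl | rfl <;> rcases hcover y with rfl | rfl | rfl | rfl <;>
      first
      | exact absurd hxy (G.loopless _)
      | exact absurd hxy hac
      | exact absurd hxy.symm hac
      | exact absurd hxy hbd
      | exact absurd hxy.symm hbd
      | simp [fa, fb, fc, fd, commute_iff_eq]
  have hgen : closure (Set.range f) = ⊤ := by
    refine eq_top_iff.2 (Prod.closure_image_inl_union_image_inr closure_inl_inr_ofAdd_one
      closure_inl_inr_ofAdd_one ▸ closure_mono ?_)
    simp only [Set.image_insert_eq, Set.image_singleton, Set.union_subset_iff,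
      Set.insert_subset_iff, Set.singleton_subset_iff]
    exact ⟨⟨⟨a, fa⟩, ⟨c, fc⟩⟩, ⟨⟨b, fb⟩, ⟨d, fd⟩⟩⟩
  refine racgLiftEquiv f hsq hcomm hgen
    (MonoidHom.noncommCoprod (dinfLift _ _ (racgGen_mul_self a) (racgGen_mul_self c))
      (dinfLift _ _ (racgGen_mul_self b) (racgGen_mul_self d)) fun m n => ?_) fun x => ?_
  · refine (commute_dinfLift _ _ ?_ ?_ n).symm
    · exact (commute_dinfLift _ _ (commute_racgGen hab) (commute_racgGen hbc.symm) m).symm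
    · exact (commute_dinfLift _ _ (commute_racgGen hda.symm) (commute_racgGen hcd) m).symm
  · rcases hcover x with rfl | rfl | rfl | rfl <;> simp [fa, fb, fc, fd, dinfLift]

end SmallGraphs

namespace AmalgProd

open Subgroup Monoid

variable {A G₁ G₂ : Type u} [Group A] [Group G₁] [Group G₂] (f : A →* G₁) (g : A →* G₂)

def of₁ : G₁ →* AmalgProd f g := PushoutI.of (φ := famHom f g) true

def of₂ : G₂ →* AmalgProd f g := PushoutI.of (φ := famHom f g) false

theorem of₁_apply_eq_of₂_apply (a : A) : of₁ f g (f a) = of₂ f g (g a) :=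
  (PushoutI.of_apply_eq_base _ true a).trans (PushoutI.of_apply_eq_base _ false a).symm

theorem closure_image_of₁_union_image_of₂ {s₁ : Set G₁} {s₂ : Set G₂} (h₁ : closure s₁ = ⊤)
    (h₂ : closure s₂ = ⊤) : closure (of₁ f g '' s₁ ∪ of₂ f g '' s₂) = ⊤ := by
  set C := closure (of₁ f g '' s₁ ∪ of₂ f g '' s₂)
  have hC₁ : (of₁ f g).range ≤ C := by
    rw [MonoidHom.range_eq_map, ← h₁, MonoidHom.map_closure]
    exact closure_mono Set.subset_union_left
  have hC₂ : (of₂ f g).range ≤ C := by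
    rw [MonoidHom.range_eq_map, ← h₂, MonoidHom.map_closure]
    exact closure_mono Set.subset_union_right
  refine eq_top_iff.2 fun x _ => PushoutI.induction_on x (fun b y => ?_) (fun a => ?_)
    fun _ _ => C.mul_mem
  · cases b
    exacts [hC₂ ⟨y, rfl⟩, hC₁ ⟨y, rfl⟩]
  · rw [← PushoutI.of_apply_eq_base _ true]
    exact hC₁ ⟨f a, rfl⟩

variable {f g} {K : Type*} [Group K]

def lift (k₁ : G₁ →* K) (k₂ : G₂ →* K) (h : k₁.comp f = k₂.comp g) : AmalgProd f g →* K :=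
  PushoutI.lift (fun b => match b with | true => k₁ | false => k₂) (k₁.comp f)
    (by rintro (_ | _); exacts [h.symm, rfl])

@[simp]
theorem lift_of₁ (k₁ : G₁ →* K) (k₂ : G₂ →* K) (h : k₁.comp f = k₂.comp g) (x : G₁) :
    lift k₁ k₂ h (of₁ f g x) = k₁ x :=
  
  PushoutI.lift_of (φ := famHom f g) _ _ _ (i := true) x

@[simp]
theorem lift_of₂ (k₁ : G₁ →* K) (k₂ : G₂ →* K) (h : k₁.comp f = k₂.comp g) (x : G₂) :
    lift k₁ k₂ h (of₂ f g x) = k₂ x :=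
  
  PushoutI.lift_of (φ := famHom f g) _ _ _ (i := false) x

end AmalgProd

section SpecialAmalgam

open Subgroup Monoid

variable {V : Type u} (Γ : SimpleGraph V) (T₁ T₂ : Set V)

abbrev SpecialAmalgam : Type u :=
  AmalgProd (inclusion (specialSubgroup_mono (Γ := Γ) (Set.inter_subset_left (t := T₂))))
    (inclusion (specialSubgroup_mono (Γ := Γ) (Set.inter_subset_right (s := T₁))))

variable {Γ T₁ T₂}

open scoped Classical in
noncomputable def amalgamGen (v : ↥(T₁ ∪ T₂)) : SpecialAmalgam Γ T₁ T₂ :=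
  if h : (v : V) ∈ T₁ then AmalgProd.of₁ _ _ (specialGen Γ ⟨v, h⟩)
  else AmalgProd.of₂ _ _ (specialGen Γ ⟨v, v.2.resolve_left h⟩)

theorem amalgamGen_of_mem_left {v : ↥(T₁ ∪ T₂)} (h : (v : V) ∈ T₁) :
    amalgamGen v = AmalgProd.of₁ _ _ (specialGen Γ ⟨v, h⟩) :=
  dif_pos h

theorem amalgamGen_of_mem_right {v : ↥(T₁ ∪ T₂)} (h : (v : V) ∈ T₂) :
    amalgamGen v = AmalgProd.of₂ _ _ (specialGen Γ ⟨v, h⟩) := by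
  by_cases h₁ : (v : V) ∈ T₁
  · rw [amalgamGen_of_mem_left h₁]
    exact AmalgProd.of₁_apply_eq_of₂_apply _ _ (specialGen Γ (⟨v, h₁, h⟩ : ↥(T₁ ∩ T₂)))
  · exact dif_neg h₁

theorem amalgamGen_mul_self (v : ↥(T₁ ∪ T₂)) : amalgamGen (Γ := Γ) v * amalgamGen v = 1 := by
  rcases v.2 with h | h
  · rw [amalgamGen_of_mem_left h, ← map_mul, specialGen_mul_self, map_one]
  · rw [amalgamGen_of_mem_right h, ← map_mul, specialGen_mul_self, map_one]

theorem commute_amalgamGen (hsep : ∀ a ∈ T₁ \ T₂, ∀ b ∈ T₂ \ T₁, ¬ Γ.Adj a b)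
    {a b : ↥(T₁ ∪ T₂)} (hab : Γ.Adj a b) : Commute (amalgamGen (Γ := Γ) a) (amalgamGen b) := by
  have hcases : ((a : V) ∈ T₁ ∧ (b : V) ∈ T₁) ∨ ((a : V) ∈ T₂ ∧ (b : V) ∈ T₂) := by
    have := hsep a; have := hsep b; have := a.2; have := b.2; have := hab.symm
    simp only [Set.mem_sdiff, Set.mem_union] at *
    tauto
  rcases hcases with ⟨ha, hb⟩ | ⟨ha, hb⟩
  · rw [amalgamGen_of_mem_left ha, amalgamGen_of_mem_left hb]
    exact (commute_specialGen (S := T₁) (a := ⟨a, ha⟩) (b := ⟨b, hb⟩) hab).map _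
  · rw [amalgamGen_of_mem_right ha, amalgamGen_of_mem_right hb]
    exact (commute_specialGen (S := T₂) (a := ⟨a, ha⟩) (b := ⟨b, hb⟩) hab).map _

theorem closure_range_amalgamGen :
    closure (Set.range (amalgamGen (Γ := Γ) (T₁ := T₁) (T₂ := T₂))) = ⊤ := by
  rw [eq_top_iff, ← AmalgProd.closure_image_of₁_union_image_of₂ _ _ (closure_range_specialGen T₁)
    (closure_range_specialGen T₂)]
  refine closure_mono ?_
  rintro _ (⟨_, ⟨v, rfl⟩, rfl⟩ | ⟨_, ⟨v, rfl⟩, rfl⟩)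
  · exact ⟨⟨v, .inl v.2⟩, amalgamGen_of_mem_left v.2⟩
  · exact ⟨⟨v, .inr v.2⟩, amalgamGen_of_mem_right v.2⟩

variable (Γ T₁ T₂) in
noncomputable def amalgamToSpecial : SpecialAmalgam Γ T₁ T₂ →* specialSubgroup Γ (T₁ ∪ T₂) :=
  AmalgProd.lift (inclusion (specialSubgroup_mono Set.subset_union_left))
    (inclusion (specialSubgroup_mono Set.subset_union_right)) rfl

theorem amalgamToSpecial_amalgamGen (v : ↥(T₁ ∪ T₂)) :
    amalgamToSpecial Γ T₁ T₂ (amalgamGen v) = specialGen Γ v := by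
  rcases v.2 with h | h
  · rw [amalgamGen_of_mem_left h]
    exact AmalgProd.lift_of₁ _ _ _ _
  · rw [amalgamGen_of_mem_right h]
    exact AmalgProd.lift_of₂ _ _ _ _

noncomputable def specialAmalgamEquiv (hsep : ∀ a ∈ T₁ \ T₂, ∀ b ∈ T₂ \ T₁, ¬ Γ.Adj a b) :
    specialSubgroup Γ (T₁ ∪ T₂) ≃* SpecialAmalgam Γ T₁ T₂ :=
  (specialEquiv (T₁ ∪ T₂)).symm.trans <|
    racgLiftEquiv amalgamGen amalgamGen_mul_self (fun _ _ h => commute_amalgamGen hsep h)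
      closure_range_amalgamGen
      ((specialEquiv (T₁ ∪ T₂)).symm.toMonoidHom.comp (amalgamToSpecial Γ T₁ T₂))
      fun v => by
        rw [MonoidHom.comp_apply, amalgamToSpecial_amalgamGen, MulEquiv.coe_toMonoidHom,
          MulEquiv.symm_apply_eq, specialEquiv_racgGen]

end SpecialAmalgam

section FourCycles

variable {V : Type*} {Γ : SimpleGraph V}

abbrev FourCycle.vertexSet (c : FourCycle Γ) : Set V := {c.v 0, c.v 1, c.v 2, c.v 3}

theorem FourCycle.adj_of_not_adj (c : FourCycle Γ) {x y z : V} (hx : x ∈ c.vertexSet)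
    (hy : y ∈ c.vertexSet) (hz : z ∈ c.vertexSet) (hxy : x ≠ y) (hxz : x ≠ z) (hyz : y ≠ z)
    (h : ¬ Γ.Adj x y) : Γ.Adj x z := by
  have h₀₁ : Γ.Adj (c.v 0) (c.v 1) := c.adj 0
  have h₁₂ : Γ.Adj (c.v 1) (c.v 2) := c.adj 1
  have h₂₃ : Γ.Adj (c.v 2) (c.v 3) := c.adj 2
  have h₃₀ : Γ.Adj (c.v 3) (c.v 0) := c.adj 3
  rcases hx with rfl | rfl | rfl | rfl <;> rcases hy with rfl | rfl | rfl | rfl <;>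
    rcases hz with rfl | rfl | rfl | rfl <;> simp_all [Γ.adj_comm]

theorem not_adj_of_mem_sdiff (htf : Γ.CliqueFree 3) {T₁ T₂ : Set V} {s u : V}
    (hs : s ∈ T₁ ∩ T₂) (hu : u ∈ T₁ ∩ T₂) (h₁ : ∀ a ∈ T₁, a ≠ s → a ≠ u → Γ.Adj s a)
    (h₂ : ∀ b ∈ T₂, b ≠ s → b ≠ u → Γ.Adj s b) :
    ∀ a ∈ T₁ \ T₂, ∀ b ∈ T₂ \ T₁, ¬ Γ.Adj a b := by
  rintro a ⟨ha₁, ha₂⟩ b ⟨hb₂, hb₁⟩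
  have hsa := h₁ a ha₁ (fun h => ha₂ (h ▸ hs.2)) (fun h => ha₂ (h ▸ hu.2))
  have hsb := h₂ b hb₂ (fun h => hb₁ (h ▸ hs.1)) (fun h => hb₁ (h ▸ hu.1))
  exact Γ.isIndepSet_neighborSet_of_triangleFree htf s hsa hsb fun h => hb₁ (h ▸ ha₁)

end FourCycles

section SpecialSmall

variable {V : Type*} {Γ : SimpleGraph V}

noncomputable def specialPathEquiv {a b c : V} (hab : Γ.Adj a b) (hbc : Γ.Adj b c)
    (hac : ¬ Γ.Adj a c) (hac' : a ≠ c) :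
    specialSubgroup Γ {a, b, c} ≃* Dinf × Multiplicative (ZMod 2) :=
  (specialEquiv _).symm.trans <|
    racgPathEquiv (a := ⟨a, by simp⟩) (b := ⟨b, by simp⟩) (c := ⟨c, by simp⟩) hab hbc hac
      (Subtype.coe_ne_coe.1 hac') (by rintro ⟨x, rfl | rfl | rfl⟩ <;> simp)

noncomputable def specialFourCycleEquiv (c : FourCycle Γ) :
    specialSubgroup Γ c.vertexSet ≃* Dinf × Dinf :=
  (specialEquiv _).symm.trans <|
    racgFourCycleEquiv (a := ⟨c.v 0, by simp⟩) (b := ⟨c.v 1, by simp⟩) (c := ⟨c.v 2, by simp⟩)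
      (d := ⟨c.v 3, by simp⟩) (c.adj 0) (c.adj 1) (c.adj 2) (c.adj 3) c.nadj02 c.nadj13
      (Subtype.coe_ne_coe.1 c.ne02) (Subtype.coe_ne_coe.1 c.ne13)
      (by rintro ⟨x, rfl | rfl | rfl | rfl⟩ <;> simp)

end SpecialSmall

theorem stmt17_general {V : Type u} (Γ : SimpleGraph V)
    (htf : Γ.CliqueFree 3) (T₁ T₂ : Set V)
    (c₁ : FourCycle Γ) (hT₁ : T₁ = {c₁.v 0, c₁.v 1, c₁.v 2, c₁.v 3})
    (c₂ : FourCycle Γ) (hT₂ : T₂ = {c₂.v 0, c₂.v 1, c₂.v 2, c₂.v 3})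
    (s t u : V) (hsu : s ≠ u) (hst : Γ.Adj s t) (htu : Γ.Adj t u)
    (hint : T₁ ∩ T₂ = {s, t, u}) :
    ¬ Γ.Adj s u ∧
    Nonempty (↥(Subgroup.closure (racgGen Γ '' (T₁ ∩ T₂))) ≃*
      Dinf × Multiplicative (ZMod 2)) ∧
    Nonempty (↥(Subgroup.closure (racgGen Γ '' T₁)) ≃* Dinf × Dinf) ∧
    Nonempty (↥(Subgroup.closure (racgGen Γ '' T₂)) ≃* Dinf × Dinf) ∧
    Nonempty (↥(Subgroup.closure (racgGen Γ '' (T₁ ∪ T₂))) ≃*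
      AmalgProd
        (Subgroup.inclusion (Subgroup.closure_mono
          (Set.image_mono Set.inter_subset_left)) :
            ↥(Subgroup.closure (racgGen Γ '' (T₁ ∩ T₂))) →*
            ↥(Subgroup.closure (racgGen Γ '' T₁)))
        (Subgroup.inclusion (Subgroup.closure_mono
          (Set.image_mono Set.inter_subset_right)))) := by
  have hs : s ∈ T₁ ∩ T₂ := by simp [hint]
  have hu : u ∈ T₁ ∩ T₂ := by simp [hint]
  have hsu' : ¬ Γ.Adj s u := Γ.isIndepSet_neighborSet_of_triangleFree htf t hst.symm htu hsu
  have hsep : ∀ a ∈ T₁ \ T₂, ∀ b ∈ T₂ \ T₁, ¬ Γ.Adj a b := by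
    subst hT₁ hT₂
    exact not_adj_of_mem_sdiff htf hs hu
      (fun a ha has hau => c₁.adj_of_not_adj hs.1 hu.1 ha hsu has.symm hau.symm hsu')
      (fun b hb hbs hbu => c₂.adj_of_not_adj hs.2 hu.2 hb hsu hbs.symm hbu.symm hsu')
  refine ⟨hsu', ?_, hT₁ ▸ ⟨specialFourCycleEquiv c₁⟩, hT₂ ▸ ⟨specialFourCycleEquiv c₂⟩,
    ⟨specialAmalgamEquiv hsep⟩⟩
  change Nonempty (specialSubgroup Γ (T₁ ∩ T₂) ≃* _)
  rw [hint]
  exact ⟨specialPathEquiv hst htu hsu' hsu⟩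

/-- If `T₁, T₂` are vertex sets of embedded four-cycles in a triangle-free graph
with `T₁ ∩ T₂ = {s,t,u}` where `s,u` are adjacent to `t` (and `s ≠ u`), then `s,u`
are non-adjacent, `W_{T₁ ∩ T₂} ≅ D∞ × ℤ/2ℤ`, each `W_{Tᵢ} ≅ D∞ × D∞`, and
`W_{T₁ ∪ T₂}` is the amalgamated product `W_{T₁} *_{W_{T₁ ∩ T₂}} W_{T₂}`. -/
theorem stmt17 {V : Type u} [Fintype V] [DecidableEq V] (Γ : SimpleGraph V)
    (htf : Γ.CliqueFree 3) (T₁ T₂ : Set V)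
    (c₁ : FourCycle Γ) (hT₁ : T₁ = {c₁.v 0, c₁.v 1, c₁.v 2, c₁.v 3})
    (c₂ : FourCycle Γ) (hT₂ : T₂ = {c₂.v 0, c₂.v 1, c₂.v 2, c₂.v 3})
    (s t u : V) (hsu : s ≠ u) (hst : Γ.Adj s t) (htu : Γ.Adj t u)
    (hint : T₁ ∩ T₂ = {s, t, u}) :
    ¬ Γ.Adj s u ∧
    Nonempty (↥(Subgroup.closure (racgGen Γ '' (T₁ ∩ T₂))) ≃*
      Dinf × Multiplicative (ZMod 2)) ∧
    Nonempty (↥(Subgroup.closure (racgGen Γ '' T₁)) ≃* Dinf × Dinf) ∧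
    Nonempty (↥(Subgroup.closure (racgGen Γ '' T₂)) ≃* Dinf × Dinf) ∧
    Nonempty (↥(Subgroup.closure (racgGen Γ '' (T₁ ∪ T₂))) ≃*
      AmalgProd
        (Subgroup.inclusion (Subgroup.closure_mono
          (Set.image_mono Set.inter_subset_left)) :
            ↥(Subgroup.closure (racgGen Γ '' (T₁ ∩ T₂))) →*
            ↥(Subgroup.closure (racgGen Γ '' T₁)))
        (Subgroup.inclusion (Subgroup.closure_mono
          (Set.image_mono Set.inter_subset_right)))) :=
  stmt17_general Γ htf T₁ T₂ c₁ hT₁ c₂ hT₂ s t u hsu hst htu hint
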